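/- arXiv:0810.5185 — 2 statements merged into one kernel-verified Lean document; each statement's English description precedes it below -/
import Mathlib

section
/- Let Λ be a ring (or finite-dimensional algebra), C a full subcategory of mod Λ closed under extensions, and suppose f : C_M → M is a minimal right C-approximation of a module M with kernel K. Then Ext¹(L, K) = 0 for every L in C (Wakamatsu's Lemma). -/
open CategoryTheory
universe u

/-- A short exact sequence `0 → X → E → Y → 0` of `R`-modules. -/
structure ModSES (R : Type u) [Ring R] (X E Y : ModuleCat.{u} R) where
  i : X ⟶ E
  p : E ⟶ Y
  inj : Function.Injective i
  surj : Function.Surjective p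
  exact : Function.Exact i p

/-- A short exact sequence splits. -/
def ModSES.Splits {R : Type u} [Ring R] {X E Y : ModuleCat.{u} R}
    (s : ModSES R X E Y) : Prop :=
  ∃ r : E ⟶ X, s.i ≫ r = 𝟙 X

/-- `Ext¹(Y, X) = 0`: every extension of `Y` by `X` splits. -/
def Ext1Zero (R : Type u) [Ring R] (Y X : ModuleCat.{u} R) : Prop :=
  ∀ (E : ModuleCat.{u} R) (s : ModSES R X E Y), s.Splits

/-- `N` belongs to `add M`: it is a direct summand of a finite direct sum of copies of `M`. -/
def InAdd (R : Type u) [Ring R] (M N : ModuleCat.{u} R) : Prop :=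
  ∃ (n : ℕ) (s : N ⟶ ModuleCat.of R (Fin n → M)) (r : ModuleCat.of R (Fin n → M) ⟶ N),
    s ≫ r = 𝟙 N

/-- `f : C_M ⟶ X` is a right `𝒞`-approximation. -/
def IsRightApprox (R : Type u) [Ring R] (𝒞 : ModuleCat.{u} R → Prop)
    {CM X : ModuleCat.{u} R} (f : CM ⟶ X) : Prop :=
  𝒞 CM ∧ ∀ C : ModuleCat.{u} R, 𝒞 C → ∀ g : C ⟶ X, ∃ h : C ⟶ CM, h ≫ f = g

/-- A morphism is right minimal. -/
def RightMinimal {R : Type u} [Ring R] {E X : ModuleCat.{u} R} (f : E ⟶ X) : Prop :=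
  ∀ g : E ⟶ E, g ≫ f = f → Function.Bijective g

/-- Projective dimension at most `n`, via projective resolutions. -/
def pdLE (R : Type u) [Ring R] : ℕ → ModuleCat.{u} R → Prop
  | 0, N => Projective N
  | (n+1), N => ∃ (P K : ModuleCat.{u} R) (ι : K ⟶ P) (π : P ⟶ N),
      Projective P ∧ Function.Injective ι ∧ Function.Surjective π ∧ Function.Exact ι π ∧
        pdLE R n K

/-- Global dimension at most `n` (tested on finitely generated modules). -/
def gldimLE (R : Type u) [Ring R] (n : ℕ) : Prop :=
  ∀ N : ModuleCat.{u} R, Module.Finite R N → pdLE R n N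

/-- The global dimension, as an element of `ℕ∞`. -/
noncomputable def gldim (R : Type u) [Ring R] : ℕ∞ :=
  sInf {d : ℕ∞ | ∃ n : ℕ, d = n ∧ gldimLE R n}

/-- An indecomposable module: nonzero, and `0, id` are the only idempotent endomorphisms. -/
def Indec {R : Type u} [Ring R] (M : ModuleCat.{u} R) : Prop :=
  Nontrivial M ∧ ∀ f : M ⟶ M, f ≫ f = f → f = 0 ∨ f = 𝟙 M

/-- `M` is a generator-cogenerator of `mod R`. -/
def IsGenCogen (R : Type u) [Ring R] (M : ModuleCat.{u} R) : Prop :=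
  InAdd R M (ModuleCat.of R R) ∧
    ∀ I : ModuleCat.{u} R, Module.Finite R I → Injective I → InAdd R M I

/-- The representation dimension is at most `n`. -/
def repdimLE (R : Type u) [Ring R] (n : ℕ) : Prop :=
  ∃ M : ModuleCat.{u} R, Module.Finite R M ∧ IsGenCogen R M ∧
    gldimLE (Module.End R M) n

/-!
Push an extension `0 → K → E → L → 0` out along `κ : K ⟶ C_M`. The resulting extension
`0 → C_M → P → L → 0` has `P ∈ 𝒞`, and the map `P ⟶ M` induced by `(f, 0)` lifts through the
approximation `f`. Right minimality turns the composite `C_M ⟶ P ⟶ C_M` into an automorphism, so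
`C_M ⟶ P` has a retraction `q` over `M`. Then `E ⟶ P ⟶ C_M` is killed by `f`, hence factors through
`K`, and this factorisation retracts `K ⟶ E`.
-/

section

variable {R : Type u} [Ring R]

lemma comp_eq_zero_of_exact {X Y Z : ModuleCat.{u} R} {a : X ⟶ Y} {b : Y ⟶ Z}
    (h : Function.Exact a b) : a ≫ b = 0 := by
  ext x
  exact (h (a x)).2 ⟨x, rfl⟩

lemma exists_lift_of_exact {K C M E : ModuleCat.{u} R} {κ : K ⟶ C} {f : C ⟶ M}
    (hκ : Function.Injective κ) (hexact : Function.Exact κ f) (φ : E ⟶ C) (hφ : φ ≫ f = 0) :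
    ∃ r : E ⟶ K, r ≫ κ = φ := by
  have : Mono κ := (ModuleCat.mono_iff_injective κ).2 hκ
  let S := ShortComplex.mk κ f (comp_eq_zero_of_exact hexact)
  have hS : S.Exact := (ShortComplex.ShortExact.moduleCat_exact_iff_function_exact S).2 hexact
  exact ⟨hS.lift φ hφ, hS.lift_f φ hφ⟩

/-- Right minimality makes `u ≫ h` an automorphism of `CM`; composing `h` with its inverse
gives the retraction. -/
lemma RightMinimal.exists_retraction {CM M P : ModuleCat.{u} R} {f : CM ⟶ M}
    (hmin : RightMinimal f) {u : CM ⟶ P} {g : P ⟶ M} {h : P ⟶ CM}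
    (hug : u ≫ g = f) (hh : h ≫ f = g) :
    ∃ q : P ⟶ CM, u ≫ q = 𝟙 CM ∧ q ≫ f = g := by
  have htf : (u ≫ h) ≫ f = f := by rw [Category.assoc, hh, hug]
  have : IsIso (u ≫ h) := (ConcreteCategory.isIso_iff_bijective _).2 (hmin _ htf)
  refine ⟨h ≫ inv (u ≫ h), by rw [← Category.assoc, IsIso.hom_inv_id], ?_⟩
  rw [Category.assoc, (IsIso.inv_comp_eq _).2 htf.symm, hh]

end

namespace ModSES

variable {R : Type u} [Ring R] {K E L : ModuleCat.{u} R} (s : ModSES R K E L)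

@[simp]
lemma i_p : s.i ≫ s.p = 0 :=
  comp_eq_zero_of_exact s.exact

variable {C : ModuleCat.{u} R} (κ : K ⟶ C)

/-- The pushout of `s.i` and `κ` is `(C × E) ⧸ pushoutRel`. -/
def pushoutRel : Submodule R (C × E) := LinearMap.range (κ.hom.prod (-s.i.hom))

def pushoutObj : ModuleCat.{u} R := ModuleCat.of R ((C × E) ⧸ s.pushoutRel κ)

def pushoutInl : C ⟶ s.pushoutObj κ :=
  ModuleCat.ofHom ((s.pushoutRel κ).mkQ.comp (LinearMap.inl R C E))

def pushoutInr : E ⟶ s.pushoutObj κ :=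
  ModuleCat.ofHom ((s.pushoutRel κ).mkQ.comp (LinearMap.inr R C E))

lemma pushout_condition : s.i ≫ s.pushoutInr κ = κ ≫ s.pushoutInl κ := by
  ext k
  change Submodule.Quotient.mk (0, s.i k) = Submodule.Quotient.mk (κ k, 0)
  refine (Submodule.Quotient.eq _).2 (LinearMap.mem_range.2 ⟨-k, ?_⟩)
  simp

section desc

variable {M : ModuleCat.{u} R} (a : C ⟶ M) (b : E ⟶ M)

lemma pushoutRel_le_ker (hab : κ ≫ a = s.i ≫ b) :
    s.pushoutRel κ ≤ LinearMap.ker (a.hom.coprod b.hom) := by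
  rintro _ ⟨k, rfl⟩
  simpa [← sub_eq_add_neg, sub_eq_zero] using congr($hab k)

def pushoutDesc (hab : κ ≫ a = s.i ≫ b) : s.pushoutObj κ ⟶ M :=
  ModuleCat.ofHom ((s.pushoutRel κ).liftQ (a.hom.coprod b.hom) (s.pushoutRel_le_ker κ a b hab))

@[simp]
lemma pushoutDesc_mk (hab : κ ≫ a = s.i ≫ b) (x : C × E) :
    s.pushoutDesc κ a b hab (Submodule.Quotient.mk x) = a x.1 + b x.2 :=
  rfl

@[simp]
lemma inl_pushoutDesc (hab : κ ≫ a = s.i ≫ b) : s.pushoutInl κ ≫ s.pushoutDesc κ a b hab = a := by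
  ext c
  change s.pushoutDesc κ a b hab (Submodule.Quotient.mk (c, 0)) = a c
  simp

@[simp]
lemma inr_pushoutDesc (hab : κ ≫ a = s.i ≫ b) : s.pushoutInr κ ≫ s.pushoutDesc κ a b hab = b := by
  ext e
  change s.pushoutDesc κ a b hab (Submodule.Quotient.mk (0, e)) = b e
  simp

end desc

def pushout : ModSES R C (s.pushoutObj κ) L where
  i := s.pushoutInl κ
  p := s.pushoutDesc κ 0 s.p (by simp)
  inj := by
    refine (injective_iff_map_eq_zero _).2 fun c hc => ?_
    obtain ⟨k, hk⟩ := LinearMap.mem_range.1 ((Submodule.Quotient.mk_eq_zero _).1 hc)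
    obtain rfl : k = 0 := s.inj (by simpa using congr(Prod.snd $hk))
    simpa using congr(Prod.fst $hk).symm
  surj := by
    intro l
    obtain ⟨e, rfl⟩ := s.surj l
    exact ⟨s.pushoutInr κ e, congr($(s.inr_pushoutDesc κ 0 s.p (by simp)) e)⟩
  exact := by
    intro y
    obtain ⟨⟨c, e⟩, rfl⟩ := Submodule.Quotient.mk_surjective _ y
    constructor
    · intro hy
      obtain ⟨k, rfl⟩ := (s.exact e).1 (by simpa using hy)
      refine ⟨c + κ k, (Submodule.Quotient.eq _).2 (LinearMap.mem_range.2 ⟨k, ?_⟩)⟩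
      simp
    · rintro ⟨c, hc⟩
      rw [← hc]
      exact congr($(s.inl_pushoutDesc κ 0 s.p (by simp)) c)

end ModSES

/-- **Wakamatsu's Lemma.** If `𝒞` is a full subcategory of `mod Λ` closed under extensions and
`f : C_M ⟶ M` is a minimal right `𝒞`-approximation with kernel `K`, then `Ext¹(L, K) = 0`
for every `L ∈ 𝒞`. -/
theorem wakamatsu_lemma (R : Type u) [Ring R] (𝒞 : ModuleCat.{u} R → Prop)
    (hext : ∀ (X E Y : ModuleCat.{u} R), 𝒞 X → 𝒞 Y → ModSES R X E Y → 𝒞 E)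
    {CM M K : ModuleCat.{u} R} (f : CM ⟶ M)
    (happrox : IsRightApprox R 𝒞 f) (hmin : RightMinimal f)
    (κ : K ⟶ CM) (hκinj : Function.Injective κ) (hker : Function.Exact κ f)
    (L : ModuleCat.{u} R) (hL : 𝒞 L) : Ext1Zero R L K := by
  intro E s
  have hκf : κ ≫ f = s.i ≫ 0 := by rw [comp_eq_zero_of_exact hker, Limits.comp_zero]
  let g := s.pushoutDesc κ f 0 hκf
  obtain ⟨h, hh⟩ := happrox.2 _ (hext _ _ _ happrox.1 hL (s.pushout κ)) g
  obtain ⟨q, huq, hqf⟩ := hmin.exists_retraction (s.inl_pushoutDesc κ f 0 hκf) hh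
  obtain ⟨r, hr⟩ := exists_lift_of_exact hκinj hker (s.pushoutInr κ ≫ q)
    (by rw [Category.assoc, hqf, s.inr_pushoutDesc])
  refine ⟨r, (ModuleCat.mono_iff_injective κ).2 hκinj |>.right_cancellation _ _ ?_⟩
  rw [Category.assoc, hr, ← Category.assoc, s.pushout_condition, Category.assoc, huq,
    Category.comp_id, Category.id_comp]
end

section
/- Let A be hereditary, A^(m) its m-replicated algebra, and M an A^(m)-module containing all projective-injective indecomposable A^(m)-modules as direct summands. If an A^(m)-module X has a projective-injective projective cover, then every minimal right add-M-approximation of X is an epimorphism. -/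
open CategoryTheory
universe u

/-- `f` factors through a projective module. -/
def FactorsThroughProj (R : Type u) [Ring R] {X Y : ModuleCat.{u} R} (f : X ⟶ Y) : Prop :=
  ∃ (P : ModuleCat.{u} R) (g : X ⟶ P) (h : P ⟶ Y), Projective P ∧ g ≫ h = f

/-- `f` factors through a projective-injective module. -/
def FactorsThroughProjInj (R : Type u) [Ring R] {X Y : ModuleCat.{u} R} (f : X ⟶ Y) : Prop :=
  ∃ (P : ModuleCat.{u} R) (g : X ⟶ P) (h : P ⟶ Y), Projective P ∧ Injective P ∧ g ≫ h = f

/-- `ι : X ⟶ I` is an injective envelope: `I` is injective and `ι` is an essential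
monomorphism. -/
def IsInjEnvelope (R : Type u) [Ring R] {X I : ModuleCat.{u} R} (ι : X ⟶ I) : Prop :=
  Injective I ∧ Function.Injective ι ∧
    ∀ S : Submodule R I, S ≠ ⊥ → S ⊓ LinearMap.range (ι.hom : X →ₗ[R] I) ≠ ⊥

/-- `Y` is the first cosyzygy `Ω⁻¹X` of `X`: the cokernel of an injective envelope of `X`. -/
def IsCosyzygy (R : Type u) [Ring R] (X Y : ModuleCat.{u} R) : Prop :=
  ∃ (I : ModuleCat.{u} R) (ι : X ⟶ I) (π : I ⟶ Y),
    IsInjEnvelope R ι ∧ Function.Surjective π ∧ Function.Exact ι π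

/-- `Y` is a `k`-th cosyzygy `Ω⁻ᵏX` of `X`. -/
def IsCosyzygyIter (R : Type u) [Ring R] : ℕ → ModuleCat.{u} R → ModuleCat.{u} R → Prop
  | 0, X, Y => Nonempty (X ≅ Y)
  | (n+1), X, Y => ∃ Z : ModuleCat.{u} R, IsCosyzygy R X Z ∧ IsCosyzygyIter R n Z Y

/-- An almost split (Auslander-Reiten) sequence. -/
def IsAlmostSplit (R : Type u) [Ring R] {X E Y : ModuleCat.{u} R} (s : ModSES R X E Y) : Prop :=
  ¬ s.Splits ∧ Indec X ∧ Indec Y ∧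
    ∀ (Z : ModuleCat.{u} R) (f : Z ⟶ Y),
      (¬ ∃ g : Y ⟶ Z, g ≫ f = 𝟙 Y) → ∃ h : Z ⟶ E, h ≫ s.p = f

/-- One nonzero morphism between finitely generated indecomposables. -/
def PathStep (R : Type u) [Ring R] (X Y : ModuleCat.{u} R) : Prop :=
  Indec X ∧ Indec Y ∧ Module.Finite R X ∧ Module.Finite R Y ∧ ∃ f : X ⟶ Y, f ≠ 0

/-- The path (pre)order on `ind R`: a path of nonzero morphisms between indecomposables. -/
def ModPath (R : Type u) [Ring R] : ModuleCat.{u} R → ModuleCat.{u} R → Prop :=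
  Relation.ReflTransGen (PathStep R)

/-- `S₁ ≤ S₂` for sets of indecomposable modules, in the sense of Ringel. -/
def SetLE (R : Type u) [Ring R] (S₁ S₂ : Set (ModuleCat.{u} R)) : Prop :=
  (∀ Y ∈ S₂, ∃ X ∈ S₁, ModPath R X Y) ∧ (∀ X ∈ S₁, ∃ Y ∈ S₂, ModPath R X Y) ∧
    ∀ X ∈ S₁, ∀ Y ∈ S₂, ¬ ModPath R Y X

/-- `S₁ < S₂` : `S₁ ≤ S₂` and moreover no module of `S₂` is isomorphic to one of `S₁`. -/
def SetLT (R : Type u) [Ring R] (S₁ S₂ : Set (ModuleCat.{u} R)) : Prop :=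
  SetLE R S₁ S₂ ∧ ∀ X ∈ S₁, ∀ Y ∈ S₂, ¬ Nonempty (X ≅ Y)

/-- `p : P ⟶ M` is a projective cover. -/
def IsProjCover (R : Type u) [Ring R] {P M : ModuleCat.{u} R} (p : P ⟶ M) : Prop :=
  Projective P ∧ Function.Surjective p ∧
    ∀ (Z : ModuleCat.{u} R) (g : Z ⟶ P), Function.Surjective (g ≫ p) → Function.Surjective g

/-- The dominant dimension of `R` is at least `n`: there is an exact sequence
`0 → R → I₁ → ⋯ → Iₙ` with all `Iⱼ` projective-injective. -/
def domdimGE (R : Type u) [Ring R] (n : ℕ) : Prop :=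
  ∃ (C : ℕ → ModuleCat.{u} R) (d : ∀ i : ℕ, C i ⟶ C (i+1)),
    Nonempty (C 0 ≅ ModuleCat.of R R) ∧
    (∀ i : ℕ, 1 ≤ i → i ≤ n → Injective (C i) ∧ Projective (C i)) ∧
    Function.Injective (d 0) ∧
    ∀ i : ℕ, i + 1 ≤ n → Function.Exact (d i) (d (i+1))

/-- `U` is an additive generator for the class of indecomposables satisfying `pred`:
`add U` consists exactly of sums of indecomposables with that property. -/
def AddGenBy (R : Type u) [Ring R] (U : ModuleCat.{u} R)
    (pred : ModuleCat.{u} R → Prop) : Prop :=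
  (∀ N : ModuleCat.{u} R, Indec N → pred N → InAdd R U N) ∧
    ∀ N : ModuleCat.{u} R, Indec N → InAdd R U N → pred N

variable (k : Type) [Field k] (A : Type) [Ring A] [Algebra k A]

def BiDiag (Dg Sb : Type) (cl rw : Sb → Dg) : Type :=
  (Dg → A) × (Sb → Module.Dual k A)

namespace BiDiag

variable {Dg Sb : Type} {cl rw : Sb → Dg}

instance : AddCommGroup (BiDiag k A Dg Sb cl rw) :=
  inferInstanceAs (AddCommGroup ((Dg → A) × (Sb → Module.Dual k A)))

variable {k A} in
noncomputable instance : Mul (BiDiag k A Dg Sb cl rw) :=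
  ⟨fun x y =>
    (fun d => x.1 d * y.1 d,
     fun s => (x.2 s).comp (LinearMap.mulLeft k (y.1 (cl s))) +
       (y.2 s).comp (LinearMap.mulRight k (x.1 (rw s))))⟩

instance : One (BiDiag k A Dg Sb cl rw) := ⟨(fun _ => 1, 0)⟩

variable {k A}

@[simp] lemma mul_fst (x y : BiDiag k A Dg Sb cl rw) (d : Dg) :
    (x * y).1 d = x.1 d * y.1 d := rfl

@[simp] lemma mul_snd_apply (x y : BiDiag k A Dg Sb cl rw) (s : Sb) (w : A) :
    (x * y).2 s w = x.2 s (y.1 (cl s) * w) + y.2 s (w * x.1 (rw s)) := rfl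

@[simp] lemma one_fst (d : Dg) : (1 : BiDiag k A Dg Sb cl rw).1 d = 1 := rfl
@[simp] lemma one_snd (s : Sb) : (1 : BiDiag k A Dg Sb cl rw).2 s = 0 := rfl
@[simp] lemma add_fst (x y : BiDiag k A Dg Sb cl rw) (d : Dg) :
    (x + y).1 d = x.1 d + y.1 d := rfl
@[simp] lemma add_snd (x y : BiDiag k A Dg Sb cl rw) (s : Sb) :
    (x + y).2 s = x.2 s + y.2 s := rfl
@[simp] lemma zero_fst (d : Dg) : (0 : BiDiag k A Dg Sb cl rw).1 d = 0 := rfl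
@[simp] lemma zero_snd (s : Sb) : (0 : BiDiag k A Dg Sb cl rw).2 s = 0 := rfl

noncomputable instance : Ring (BiDiag k A Dg Sb cl rw) :=
  { (inferInstance : AddCommGroup (BiDiag k A Dg Sb cl rw)),
    (inferInstance : Mul (BiDiag k A Dg Sb cl rw)),
    (inferInstance : One (BiDiag k A Dg Sb cl rw)) with
    mul_assoc := fun x y z =>
      Prod.ext (funext fun d => mul_assoc _ _ _)
        (funext fun s => LinearMap.ext fun w => by simp [mul_assoc]; abel)
    one_mul := fun x =>
      Prod.ext (funext fun d => one_mul _)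
        (funext fun s => LinearMap.ext fun w => by simp)
    mul_one := fun x =>
      Prod.ext (funext fun d => mul_one _)
        (funext fun s => LinearMap.ext fun w => by simp)
    left_distrib := fun x y z =>
      Prod.ext (funext fun d => mul_add _ _ _)
        (funext fun s => LinearMap.ext fun w => by
          simp [mul_add, add_mul, map_add]; abel)
    right_distrib := fun x y z =>
      Prod.ext (funext fun d => add_mul _ _ _)
        (funext fun s => LinearMap.ext fun w => by
          simp [mul_add, add_mul, map_add]; abel)
    zero_mul := fun x =>
      Prod.ext (funext fun d => zero_mul _)
        (funext fun s => LinearMap.ext fun w => by simp)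
    mul_zero := fun x =>
      Prod.ext (funext fun d => mul_zero _)
        (funext fun s => LinearMap.ext fun w => by simp) }

end BiDiag

/-- The right repetitive algebra `A'` of `A` (ℕ × ℕ lower bidiagonal matrices, with diagonal
entries in `A` and subdiagonal entries in `D(A)`). -/
noncomputable def RightRep := BiDiag k A ℕ ℕ id Nat.succ

noncomputable instance : Ring (RightRep k A) := inferInstanceAs (Ring (BiDiag k A ℕ ℕ id Nat.succ))

/-- The repetitive algebra `Â` of `A` (ℤ-indexed). -/
noncomputable def HatRep := BiDiag k A ℤ ℤ id (· + 1)

noncomputable instance : Ring (HatRep k A) := inferInstanceAs (Ring (BiDiag k A ℤ ℤ id (· + 1)))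

/-- The `m`-replicated algebra `A^(m)` of `A`. -/
noncomputable def ReplAlg (m : ℕ) := BiDiag k A (Fin (m+1)) (Fin m) Fin.castSucc Fin.succ

noncomputable instance (m : ℕ) : Ring (ReplAlg k A m) :=
  inferInstanceAs (Ring (BiDiag k A (Fin (m+1)) (Fin m) Fin.castSucc Fin.succ))

/-- Projection of the right repetitive algebra onto the `0`-th copy of `A`. -/
noncomputable def RightRep.proj0 : RightRep k A →+* A where
  toFun x := x.1 0
  map_one' := rfl
  map_mul' _ _ := rfl
  map_zero' := rfl
  map_add' _ _ := rfl

/-- Projection of the repetitive algebra onto the `0`-th copy of `A`. -/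
noncomputable def HatRep.proj0 : HatRep k A →+* A where
  toFun x := x.1 0
  map_one' := rfl
  map_mul' _ _ := rfl
  map_zero' := rfl
  map_add' _ _ := rfl

/-- Projection of the `m`-replicated algebra onto the `0`-th copy of `A`. -/
noncomputable def ReplAlg.proj0 (m : ℕ) : ReplAlg k A m →+* A where
  toFun x := x.1 0
  map_one' := rfl
  map_mul' _ _ := rfl
  map_zero' := rfl
  map_add' _ _ := rfl

/-- Truncation from the right repetitive algebra onto the `m`-replicated algebra. -/
noncomputable def RightRep.trunc (m : ℕ) : RightRep k A →+* ReplAlg k A m where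
  toFun x := (fun d => x.1 d, fun s => x.2 s)
  map_one' := rfl
  map_mul' x y := by
    refine Prod.ext rfl (funext fun s => LinearMap.ext fun w => ?_)
    rfl
  map_zero' := rfl
  map_add' _ _ := rfl

/-!
The projective cover `p : P ⟶ X` is onto and `P` is projective-injective, so it suffices that
every `y ∈ P` lies in a finitely generated direct summand `C` of `P`. Such a `C` is again
projective-injective; splitting off idempotents (induction on length) writes it as a finite sum
of indecomposable projective-injectives, so `C ∈ add M`, and `C ↪ P ⟶ X` factors through `g`.

Write `R = A^(m)`. The summand `C` is an injective envelope of `R y` inside `P`. Take `Z ≤ P` maximal with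
`Z ⊓ R y = ⊥`; then `R y` is essential in `P ⧸ Z`, so `P ⧸ Z` embeds into the finitely generated
injective module `Hom_k(R, R y)`. Extending `R y ↪ P` along `R y ↪ P ⧸ Z` gives `φ : P ⧸ Z → P`
such that `P → P ⧸ Z` composed with `φ` is an injective, hence bijective, endomorphism of the
Artinian module `P ⧸ Z`; thus `P = range φ ⊕ Z`.
-/

section Coinduced

variable (k R V : Type*) [Field k] [Ring R] [Algebra k R] [AddCommGroup V] [Module k V]

def Coinduced : Type _ := R →ₗ[k] V

namespace Coinduced

instance : AddCommGroup (Coinduced k R V) := inferInstanceAs (AddCommGroup (R →ₗ[k] V))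
instance : Module k (Coinduced k R V) := inferInstanceAs (Module k (R →ₗ[k] V))
instance : FunLike (Coinduced k R V) R V := inferInstanceAs (FunLike (R →ₗ[k] V) R V)
instance : LinearMapClass (Coinduced k R V) k R V :=
  inferInstanceAs (LinearMapClass (R →ₗ[k] V) k R V)

instance : Module R (Coinduced k R V) where
  smul a φ := (φ : R →ₗ[k] V) ∘ₗ LinearMap.mulRight k a
  one_smul φ := LinearMap.ext fun r => congrArg φ (mul_one r)
  mul_smul a b φ := LinearMap.ext fun r => congrArg φ (mul_assoc r a b).symm
  smul_zero _ := rfl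
  smul_add _ _ _ := rfl
  add_smul a b φ := LinearMap.ext fun r => by
    change φ (r * (a + b)) = φ (r * a) + φ (r * b)
    rw [mul_add, map_add]
  zero_smul φ := LinearMap.ext fun r => by
    change φ (r * 0) = 0
    rw [mul_zero, map_zero]

variable {k R V}

lemma ext {φ ψ : Coinduced k R V} (h : ∀ r, φ r = ψ r) : φ = ψ := LinearMap.ext h

@[simp] lemma smul_apply (a : R) (φ : Coinduced k R V) (r : R) : (a • φ) r = φ (r * a) := rfl

@[simp] lemma field_smul_apply (c : k) (φ : Coinduced k R V) (r : R) : (c • φ) r = c • φ r := rfl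

instance : IsScalarTower k R (Coinduced k R V) :=
  ⟨fun c a φ => ext fun r => by simp⟩

instance [FiniteDimensional k R] [FiniteDimensional k V] :
    FiniteDimensional k (Coinduced k R V) :=
  inferInstanceAs (FiniteDimensional k (R →ₗ[k] V))

-- The extension of `g : I → Hom_k(R, V)` to `R` is fixed by its value at `1`, which is read off
-- from `g` through a `k`-linear retraction of `I ↪ R`.
theorem baer : Module.Baer R (Coinduced k R V) := by
  intro I g
  obtain ⟨l, hl⟩ := (I.restrictScalars k).subtype.exists_leftInverse_of_injective (by simp)
  let ψ : Coinduced k R V := (LinearMap.applyₗ (1 : R) ∘ₗ g.restrictScalars k) ∘ₗ l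
  refine ⟨LinearMap.toSpanSingleton R _ ψ, fun x hx => ext fun r => ?_⟩
  change g (l (r * x)) 1 = g ⟨x, hx⟩ r
  rw [show l (r * x) = ⟨r * x, I.smul_mem r hx⟩ from LinearMap.congr_fun hl ⟨r * x, _⟩]
  exact (congrArg (· 1) (g.map_smul r ⟨x, hx⟩)).trans (congrArg (g ⟨x, hx⟩) (one_mul r))

variable (k R) in
def coev (N : Type*) [AddCommGroup N] [Module k N] [Module R N] [IsScalarTower k R N] :
    N →ₗ[R] Coinduced k R N where
  toFun x := (LinearMap.toSpanSingleton R N x).restrictScalars k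
  map_add' x y := ext fun r => smul_add r x y
  map_smul' a x := ext fun r => (mul_smul r a x).symm

theorem coev_injective (N : Type*) [AddCommGroup N] [Module k N] [Module R N]
    [IsScalarTower k R N] : Function.Injective (coev k R N) :=
  (injective_iff_map_eq_zero _).2 fun x hx => by
    have h : (1 : R) • x = 0 := congrArg (· (1 : R)) hx
    rwa [one_smul] at h

end Coinduced

end Coinduced

section Essential

variable {R M : Type*} [Ring R] [AddCommGroup M] [Module R M]

def Submodule.IsEssential (N : Submodule R M) : Prop :=
  ∀ S : Submodule R M, Disjoint S N → S = ⊥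

variable {N P : Type*} [AddCommGroup N] [Module R N] [AddCommGroup P] [Module R P]

theorem Submodule.IsEssential.injective_of_injective_comp {j : N →ₗ[R] M}
    (hj : (LinearMap.range j).IsEssential) {f : M →ₗ[R] P} (hf : Function.Injective (f ∘ₗ j)) :
    Function.Injective f := by
  rw [← LinearMap.ker_eq_bot]
  refine hj _ (Submodule.disjoint_def.2 ?_)
  rintro _ hx ⟨n, rfl⟩
  rw [hf (show f (j n) = f (j 0) by simpa using hx), map_zero]

theorem Module.Finite.of_isEssential (k : Type*) [Field k] [Algebra k R] [FiniteDimensional k R]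
    [Module.Finite R N] {j : N →ₗ[R] M} (hj : Function.Injective j)
    (hess : (LinearMap.range j).IsEssential) : Module.Finite R M := by
  let _ : Module k N := Module.compHom N (algebraMap k R)
  have : IsScalarTower k R N := .of_algebraMap_smul fun _ _ => rfl
  have : Module.Finite k N := .trans R N
  have : Module.Finite R (Coinduced k R N) := .of_restrictScalars_finite k R _
  have : IsNoetherianRing R := isNoetherian_of_tower k inferInstance
  obtain ⟨F, hF⟩ := Coinduced.baer.extension_property j hj (Coinduced.coev k R N)
  exact .of_injective F (hess.injective_of_injective_comp (hF ▸ Coinduced.coev_injective N))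

end Essential

section Summand

universe v

variable {R : Type u} {P : Type v} [Ring R] [AddCommGroup P] [Module R P]

theorem Submodule.exists_maximal_disjoint (N : Submodule R P) :
    ∃ Z : Submodule R P, Maximal (Disjoint · N) Z :=
  zorn_le₀ _ fun c hc hchain =>
    ⟨sSup c, hchain.directedOn.disjoint_sSup_left.2 hc, fun _ => le_sSup⟩

theorem Submodule.isEssential_range_mkQ_comp_subtype {N Z : Submodule R P}
    (hZ : Maximal (Disjoint · N) Z) : (LinearMap.range (Z.mkQ ∘ₗ N.subtype)).IsEssential := by
  intro S hS
  have hT : Disjoint (S.comap Z.mkQ) N := by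
    refine Submodule.disjoint_def.2 fun x hxS hxN => ?_
    have : Z.mkQ x = 0 := Submodule.disjoint_def.1 hS _ hxS ⟨⟨x, hxN⟩, rfl⟩
    exact Submodule.disjoint_def.1 hZ.prop x (by simpa using this) hxN
  have hTZ : S.comap Z.mkQ ≤ Z := hZ.2 hT (by simpa using LinearMap.ker_le_comap (p := S) Z.mkQ)
  rw [eq_bot_iff]
  intro s hs
  obtain ⟨x, rfl⟩ := Z.mkQ_surjective s
  simpa using hTZ hs

theorem LinearMap.isCompl_range_of_bijective_mkQ_comp {Q : Type*} [AddCommGroup Q] [Module R Q]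
    {Z : Submodule R P} (φ : Q →ₗ[R] P) (h : Function.Bijective (Z.mkQ ∘ₗ φ)) :
    IsCompl (LinearMap.range φ) Z := by
  constructor
  · refine Submodule.disjoint_def.2 ?_
    rintro _ ⟨q, rfl⟩ hq
    rw [h.1 (show Z.mkQ (φ q) = Z.mkQ (φ 0) by simpa using hq), map_zero]
  · refine codisjoint_iff_le_sup.2 fun x _ => ?_
    obtain ⟨q, hq⟩ := h.2 (Z.mkQ x)
    refine Submodule.mem_sup.2 ⟨φ q, ⟨q, rfl⟩, x - φ q, ?_, add_sub_cancel _ _⟩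
    rw [← Submodule.Quotient.mk_eq_zero, Submodule.Quotient.mk_sub]
    simpa [sub_eq_zero] using hq.symm

theorem Submodule.exists_finite_isComplemented_le (k : Type*) [Field k] [Algebra k R]
    [FiniteDimensional k R] [Small.{v} R] [Module.Injective R P] (N : Submodule R P)
    [Module.Finite R N] : ∃ C : Submodule R P, N ≤ C ∧ Module.Finite R C ∧ IsComplemented C := by
  have : IsArtinianRing R := .of_finite k R
  obtain ⟨Z, hZ⟩ := N.exists_maximal_disjoint
  set j := Z.mkQ ∘ₗ N.subtype
  have hj : Function.Injective j := by
    rw [← LinearMap.ker_eq_bot, LinearMap.ker_comp, Submodule.ker_mkQ,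
      ← Submodule.disjoint_iff_comap_eq_bot]
    exact hZ.prop.symm
  have hess := Submodule.isEssential_range_mkQ_comp_subtype hZ
  have : Module.Finite R (P ⧸ Z) := .of_isEssential k hj hess
  obtain ⟨φ, hφ⟩ := Module.Injective.extension_property R P _ _ j hj N.subtype
  have hψ : Function.Injective (Z.mkQ ∘ₗ φ) :=
    hess.injective_of_injective_comp (by rwa [LinearMap.comp_assoc, hφ])
  refine ⟨LinearMap.range φ, fun n hn => ⟨j ⟨n, hn⟩, congrArg (· ⟨n, hn⟩) hφ⟩, inferInstance,
    Z, LinearMap.isCompl_range_of_bijective_mkQ_comp φ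
      ⟨hψ, IsArtinian.surjective_of_injective_endomorphism _ hψ⟩⟩

end Summand

section AddClosure

variable {R : Type u} [Ring R] {M : ModuleCat.{u} R}

theorem InAdd.of_retract {N N' : ModuleCat.{u} R} (e : Retract N N') (h : InAdd R M N') :
    InAdd R M N := by
  obtain ⟨n, s, r, hsr⟩ := h
  exact ⟨n, e.i ≫ s, r ≫ e.r, by simp [reassoc_of% hsr]⟩

theorem inAdd_of_subsingleton (N : ModuleCat.{u} R) [Subsingleton N] : InAdd R M N :=
  ⟨0, 0, 0, by ext x; exact Subsingleton.elim _ _⟩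

theorem InAdd.prod {A B : ModuleCat.{u} R} (hA : InAdd R M A) (hB : InAdd R M B) :
    InAdd R M (ModuleCat.of R (A × B)) := by
  obtain ⟨n₁, s₁, r₁, h₁⟩ := hA
  obtain ⟨n₂, s₂, r₂, h₂⟩ := hB
  let e : (Fin (n₁ + n₂) → M) ≃ₗ[R] (Fin n₁ → M) × (Fin n₂ → M) :=
    (LinearEquiv.funCongrLeft R M finSumFinEquiv).trans
      (LinearEquiv.sumPiEquivProdPi R _ _ fun _ => M)
  refine ⟨n₁ + n₂, ModuleCat.ofHom (e.symm.toLinearMap ∘ₗ s₁.hom.prodMap s₂.hom),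
    ModuleCat.ofHom (r₁.hom.prodMap r₂.hom ∘ₗ e.toLinearMap), ?_⟩
  refine ModuleCat.hom_ext (LinearMap.ext fun ⟨a, b⟩ => Prod.ext ?_ ?_)
  · simpa using congr($h₁ a)
  · simpa using congr($h₂ b)

noncomputable def ModuleCat.retractOfIsCompl {C : ModuleCat.{u} R} {p q : Submodule R C}
    (h : IsCompl p q) : Retract (ModuleCat.of R p) C where
  i := ModuleCat.ofHom p.subtype
  r := ModuleCat.ofHom (p.projectionOnto q h)
  retract := by ext x; exact congrArg Subtype.val (Submodule.projectionOnto_apply_left h x)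

theorem inAdd_of_isCompl {C : ModuleCat.{u} R} {p q : Submodule R C} (h : IsCompl p q)
    (hp : InAdd R M (ModuleCat.of R p)) (hq : InAdd R M (ModuleCat.of R q)) : InAdd R M C :=
  (hp.prod hq).of_retract (Submodule.prodEquivOfIsCompl p q h).toModuleIso.symm.retract

theorem inAdd_of_forall_indec [IsArtinianRing R] (Pr : ModuleCat.{u} R → Prop)
    (hPr : ∀ {C D : ModuleCat.{u} R}, Retract C D → Pr D → Pr C)
    (hM : ∀ N : ModuleCat.{u} R, Indec N → Module.Finite R N → Pr N → InAdd R M N)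
    (C : ModuleCat.{u} R) [Module.Finite R C] (hC : Pr C) : InAdd R M C := by
  induction hℓ : Module.length R C using WellFoundedLT.induction generalizing C with
  | ind ℓ ih =>
  rcases subsingleton_or_nontrivial C with hsub | hnt
  · exact inAdd_of_subsingleton C
  by_cases hind : ∀ f : C ⟶ C, f ≫ f = f → f = 0 ∨ f = 𝟙 C
  · exact hM C ⟨hnt, hind⟩ inferInstance hC
  push Not at hind
  obtain ⟨e, he, he0, he1⟩ := hind
  have hidem : IsIdempotentElem e.hom := congrArg ModuleCat.Hom.hom he
  have hcompl := LinearMap.IsIdempotentElem.isCompl hidem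
  have hsummand : ∀ {p q : Submodule R C}, IsCompl p q → p ≠ ⊤ →
      InAdd R M (ModuleCat.of R p) := fun h hp =>
    ih _ (hℓ ▸ Submodule.length_lt hp) _ (hPr (ModuleCat.retractOfIsCompl h) hC) rfl
  refine inAdd_of_isCompl hcompl (hsummand hcompl ?_) (hsummand hcompl.symm ?_)
  · refine fun htop => he1 (ModuleCat.hom_ext (LinearMap.ext fun x => ?_))
    exact (LinearMap.IsIdempotentElem.mem_range_iff hidem).1 (htop ▸ Submodule.mem_top)
  · exact fun htop => he0 (ModuleCat.hom_ext (LinearMap.ker_eq_top.1 htop))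

end AddClosure

namespace BiDiag

variable {k A} {Dg Sb : Type} {cl rw : Sb → Dg}

noncomputable instance : Module k (BiDiag k A Dg Sb cl rw) :=
  inferInstanceAs (Module k ((Dg → A) × (Sb → Module.Dual k A)))

@[simp] lemma smul_fst (c : k) (x : BiDiag k A Dg Sb cl rw) (d : Dg) :
    (c • x).1 d = c • x.1 d := rfl

@[simp] lemma smul_snd (c : k) (x : BiDiag k A Dg Sb cl rw) (s : Sb) :
    (c • x).2 s = c • x.2 s := rfl

noncomputable instance : Algebra k (BiDiag k A Dg Sb cl rw) :=
  Algebra.ofModule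
    (fun c x y => Prod.ext (funext fun _ => smul_mul_assoc _ _ _)
      (funext fun _ => LinearMap.ext fun _ => by simp [mul_add]))
    (fun c x y => Prod.ext (funext fun _ => mul_smul_comm _ _ _)
      (funext fun _ => LinearMap.ext fun _ => by simp [mul_add]))

end BiDiag

noncomputable instance (m : ℕ) : Algebra k (ReplAlg k A m) :=
  inferInstanceAs (Algebra k (BiDiag k A (Fin (m+1)) (Fin m) Fin.castSucc Fin.succ))

instance [FiniteDimensional k A] (m : ℕ) : FiniteDimensional k (ReplAlg k A m) :=
  inferInstanceAs (FiniteDimensional k ((Fin (m+1) → A) × (Fin m → Module.Dual k A)))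

theorem minimal_approx_surjective_of_projInj_cover_general
    (k : Type) [Field k] (A : Type) [Ring A] [Algebra k A] [FiniteDimensional k A]
    (m : ℕ)
    (M : ModuleCat (ReplAlg k A m))
    (hM : ∀ N : ModuleCat (ReplAlg k A m), Indec N → Module.Finite (ReplAlg k A m) N →
      Projective N → Injective N → InAdd (ReplAlg k A m) M N)
    (X : ModuleCat (ReplAlg k A m))
    (hX : ∃ (P : ModuleCat (ReplAlg k A m)) (p : P ⟶ X),
      IsProjCover (ReplAlg k A m) p ∧ Injective P)
    (M₁ : ModuleCat (ReplAlg k A m)) (g : M₁ ⟶ X)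
    (hg : IsRightApprox (ReplAlg k A m) (fun N => InAdd (ReplAlg k A m) M N) g) :
    Function.Surjective g := by
  obtain ⟨P, p, ⟨hPproj, hp, -⟩, hPinj⟩ := hX
  have : Module.Injective (ReplAlg k A m) P := Module.injective_module_of_injective_object _ _
  have : IsArtinianRing (ReplAlg k A m) := .of_finite k _
  intro x
  obtain ⟨y, rfl⟩ := hp x
  obtain ⟨C, hyC, hCfin, Z, hCZ⟩ :=
    (Submodule.span (ReplAlg k A m) {y}).exists_finite_isComplemented_le k
  let e := ModuleCat.retractOfIsCompl (C := P) hCZ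
  have hCM : InAdd (ReplAlg k A m) M (ModuleCat.of _ C) :=
    inAdd_of_forall_indec (fun N => Projective N ∧ Injective N)
      (fun r h => ⟨r.projective (p := h.1), r.injective (i := h.2)⟩)
      (fun N hN hfin h => hM N hN hfin h.1 h.2) _ ⟨e.projective, e.injective⟩
  obtain ⟨h, hh⟩ := hg.2 _ hCM (e.i ≫ p)
  have hy : y ∈ C := hyC (Submodule.mem_span_singleton_self y)
  exact ⟨h ⟨y, hy⟩, congr($hh ⟨y, hy⟩)⟩

/-- If `M` contains all projective-injective indecomposable `A^(m)`-modules as direct summands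
and `X` has a projective-injective projective cover, then every minimal right
`add M`-approximation of `X` is an epimorphism. -/
theorem minimal_approx_surjective_of_projInj_cover
    (k : Type) [Field k] (A : Type) [Ring A] [Algebra k A] [FiniteDimensional k A]
    (hhered : gldimLE A 1) (m : ℕ)
    (M : ModuleCat (ReplAlg k A m))
    (hM : ∀ N : ModuleCat (ReplAlg k A m), Indec N → Module.Finite (ReplAlg k A m) N →
      Projective N → Injective N → InAdd (ReplAlg k A m) M N)
    (X : ModuleCat (ReplAlg k A m))
    (hX : ∃ (P : ModuleCat (ReplAlg k A m)) (p : P ⟶ X),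
      IsProjCover (ReplAlg k A m) p ∧ Injective P)
    (M₁ : ModuleCat (ReplAlg k A m)) (g : M₁ ⟶ X)
    (hg : IsRightApprox (ReplAlg k A m) (fun N => InAdd (ReplAlg k A m) M N) g)
    (hmin : RightMinimal g) :
    Function.Surjective g :=
  minimal_approx_surjective_of_projInj_cover_general k A m M hM X hX M₁ g hg
end
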